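/- Let 0 < gamma < 1, lambda > 0, and let A_1, ..., A_t be vectors in R^d with ||A_s||_2 <= L. Define V_t = sum_{s=1}^t gamma^{-s} A_s A_s^T + lambda gamma^{-t} I_d and tilde_V_t = sum_{s=1}^t gamma^{-2s} A_s A_s^T + lambda gamma^{-2t} I_d. Then det(V_t) <= (lambda gamma^{-t} + L^2 (gamma^{-t} - 1) / (d (1 - gamma)))^d and det(tilde_V_t) <= (lambda gamma^{-2t} + L^2 (gamma^{-2t} - 1) / (d (1 - gamma^2)))^d. -/

import Mathlib

set_option autoImplicit false

open Matrix Finset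


lemma trace_eq_sum_eigenvalues' {d : ℕ} {M : Matrix (Fin d) (Fin d) ℝ} (hM : M.IsHermitian) :
    M.trace = ∑ i, hM.eigenvalues i := by
  simpa using hM.trace_eq_sum_eigenvalues

lemma det_le_trace_div_pow {d : ℕ} {M : Matrix (Fin d) (Fin d) ℝ} (hM : M.PosSemidef) :
    M.det ≤ (M.trace / d) ^ d := by
  rcases Nat.eq_zero_or_pos d with hd | hd
  · subst hd
    rw [Matrix.det_fin_zero, pow_zero]
  have hd' : (0:ℝ) < d := by exact_mod_cast hd
  have hdet : M.det = ∏ i, hM.1.eigenvalues i := by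
    have := hM.1.det_eq_prod_eigenvalues
    simpa using this
  have htr : M.trace = ∑ i, hM.1.eigenvalues i := trace_eq_sum_eigenvalues' hM.1
  rw [hdet, htr]
  set e := hM.1.eigenvalues with he
  have hnn : ∀ i : Fin d, 0 ≤ e i := hM.eigenvalues_nonneg
  have hgm := Real.geom_mean_le_arith_mean_weighted Finset.univ (fun _ => (d:ℝ)⁻¹) e
    (fun i _ => by positivity) (by simp [Finset.card_univ, mul_inv_cancel₀ hd'.ne']) (fun i _ => hnn i)
  have hpnn : (0:ℝ) ≤ ∏ i, e i := Finset.prod_nonneg fun i _ => hnn i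
  have hprod : (∏ i, e i) = (∏ i, e i ^ ((d:ℝ)⁻¹)) ^ (d:ℕ) := by
    rw [Real.finset_prod_rpow _ _ (fun i _ => hnn i) _, ← Real.rpow_natCast ((∏ i, e i) ^ ((d:ℝ)⁻¹)),
      ← Real.rpow_mul hpnn, inv_mul_cancel₀ hd'.ne', Real.rpow_one]
  rw [hprod]
  have hsum : ∑ i, ((d:ℝ)⁻¹) * e i = (∑ i, e i) / d := by
    rw [← Finset.mul_sum]; ring
  refine pow_le_pow_left₀ (Finset.prod_nonneg fun i _ => Real.rpow_nonneg (hnn i) _) ?_ d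
  calc ∏ i, e i ^ ((d:ℝ)⁻¹) ≤ ∑ i, ((d:ℝ)⁻¹) * e i := hgm
    _ = (∑ i, e i) / d := hsum

lemma posSemidef_vecMulVec' {d : ℕ} (v : Fin d → ℝ) : (vecMulVec v v).PosSemidef := by
  rw [Matrix.posSemidef_iff_dotProduct_mulVec]
  constructor
  · ext i j; simp [Matrix.vecMulVec_apply, mul_comm]
  · intro x
    have : star x ⬝ᵥ (vecMulVec v v *ᵥ x) = (v ⬝ᵥ x) ^ 2 := by
      simp only [dotProduct, Matrix.mulVec, Matrix.vecMulVec_apply, star_trivial,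
        Pi.star_apply, sq, Finset.sum_mul_sum, Finset.mul_sum]
      apply Finset.sum_congr rfl
      intro i _
      rw [Finset.sum_mul]
      apply Finset.sum_congr rfl
      intro j _
      ring
    rw [this]
    positivity

lemma psd_smul' {d : ℕ} {M : Matrix (Fin d) (Fin d) ℝ} (hM : M.PosSemidef) {c : ℝ} (hc : 0 ≤ c) :
    (c • M).PosSemidef := by
  rw [Matrix.posSemidef_iff_dotProduct_mulVec]
  constructor
  · unfold Matrix.IsHermitian
    rw [Matrix.conjTranspose_smul, hM.1]
    simp
  · intro x
    rw [Matrix.smul_mulVec, dotProduct_smul, smul_eq_mul]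
    exact mul_nonneg hc ((Matrix.posSemidef_iff_dotProduct_mulVec.mp hM).2 x)

lemma trace_vecMulVec' {d : ℕ} (v : Fin d → ℝ) : (vecMulVec v v).trace = v ⬝ᵥ v := by
  simp [Matrix.trace, Matrix.diag, Matrix.vecMulVec_apply, dotProduct]

lemma geom_sum_inv' (γ : ℝ) (hγ0 : γ ≠ 0) (hγ1 : γ ≠ 1) (t : ℕ) :
    ∑ s ∈ Icc 1 t, (γ ^ s)⁻¹ = ((γ ^ t)⁻¹ - 1) / (1 - γ) := by
  induction t with
  | zero => simp
  | succ t ih =>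
    rw [Finset.sum_Icc_succ_top (by omega), ih]
    have h1 : (1:ℝ) - γ ≠ 0 := by intro h; apply hγ1; linarith
    field_simp
    ring

lemma psd_sum' {d : ℕ} {ι : Type*} [DecidableEq ι] (s : Finset ι) (f : ι → Matrix (Fin d) (Fin d) ℝ)
    (h : ∀ i ∈ s, (f i).PosSemidef) : (∑ i ∈ s, f i).PosSemidef := by
  induction s using Finset.induction_on with
  | empty => simpa using (Matrix.PosSemidef.zero : (0 : Matrix (Fin d) (Fin d) ℝ).PosSemidef)
  | @insert a s ha ih =>
    rw [Finset.sum_insert ha]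
    exact (h a (Finset.mem_insert_self a s)).add (ih fun i hi => h i (Finset.mem_insert_of_mem hi))

lemma aux_main {d : ℕ} (t : ℕ) (A : ℕ → Fin d → ℝ) (β lam L : ℝ)
    (hβ0 : 0 < β) (hβ1 : β < 1) (hlam : 0 < lam)
    (hA : ∀ s ∈ Icc 1 t, A s ⬝ᵥ A s ≤ L ^ 2) :
    (∑ s ∈ Icc 1 t, (β ^ s)⁻¹ • vecMulVec (A s) (A s)
        + (lam * (β ^ t)⁻¹) • (1 : Matrix (Fin d) (Fin d) ℝ)).det
      ≤ (lam * (β ^ t)⁻¹ + L ^ 2 * ((β ^ t)⁻¹ - 1) / (d * (1 - β))) ^ d := by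
  rcases Nat.eq_zero_or_pos d with hd | hd
  · subst hd
    rw [Matrix.det_fin_zero, pow_zero]
  have hd' : (0:ℝ) < d := by exact_mod_cast hd
  set M := ∑ s ∈ Icc 1 t, (β ^ s)⁻¹ • vecMulVec (A s) (A s)
      + (lam * (β ^ t)⁻¹) • (1 : Matrix (Fin d) (Fin d) ℝ) with hMdef
  have hβne : β ≠ 0 := hβ0.ne'
  have h1β : (0:ℝ) < 1 - β := by linarith
  -- PSD
  have hpsd1 : (∑ s ∈ Icc 1 t, (β ^ s)⁻¹ • vecMulVec (A s) (A s)).PosSemidef := by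
    apply psd_sum'
    intro s _
    exact psd_smul' (posSemidef_vecMulVec' (A s)) (by positivity)
  have hpsd2 : ((lam * (β ^ t)⁻¹) • (1 : Matrix (Fin d) (Fin d) ℝ)).PosSemidef :=
    psd_smul' Matrix.PosSemidef.one (by positivity)
  have hM : M.PosSemidef := hpsd1.add hpsd2
  -- trace
  have htr : M.trace = (∑ s ∈ Icc 1 t, (β ^ s)⁻¹ * (A s ⬝ᵥ A s)) + lam * (β ^ t)⁻¹ * d := by
    rw [hMdef, Matrix.trace_add, Matrix.trace_sum, Matrix.trace_smul, Matrix.trace_one]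
    simp only [Matrix.trace_smul, trace_vecMulVec', smul_eq_mul, Fintype.card_fin]
  have hsum : ∑ s ∈ Icc 1 t, (β ^ s)⁻¹ = ((β ^ t)⁻¹ - 1) / (1 - β) :=
    geom_sum_inv' β hβne (by linarith) t
  have htrle : M.trace ≤ L ^ 2 * (((β ^ t)⁻¹ - 1) / (1 - β)) + lam * (β ^ t)⁻¹ * d := by
    rw [htr]
    gcongr ?_ + _
    calc ∑ s ∈ Icc 1 t, (β ^ s)⁻¹ * (A s ⬝ᵥ A s)
        ≤ ∑ s ∈ Icc 1 t, (β ^ s)⁻¹ * L ^ 2 := by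
          apply Finset.sum_le_sum
          intro s hs
          exact mul_le_mul_of_nonneg_left (hA s hs) (by positivity)
      _ = L ^ 2 * (((β ^ t)⁻¹ - 1) / (1 - β)) := by
          rw [← Finset.sum_mul, hsum]; ring
  have hbase : L ^ 2 * (((β ^ t)⁻¹ - 1) / (1 - β)) + lam * (β ^ t)⁻¹ * d
      = d * (lam * (β ^ t)⁻¹ + L ^ 2 * ((β ^ t)⁻¹ - 1) / (d * (1 - β))) := by
    field_simp
    ring
  have htrnn : 0 ≤ M.trace := by
    rw [trace_eq_sum_eigenvalues' hM.1]
    exact Finset.sum_nonneg fun i _ => hM.eigenvalues_nonneg i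
  calc M.det ≤ (M.trace / d) ^ d := det_le_trace_div_pow hM
    _ ≤ (lam * (β ^ t)⁻¹ + L ^ 2 * ((β ^ t)⁻¹ - 1) / (d * (1 - β))) ^ d := by
        apply pow_le_pow_left₀ (by positivity)
        rw [div_le_iff₀ hd']
        calc M.trace ≤ _ := htrle
          _ = _ := by rw [hbase]; ring

/-- determinant bounds for the discounted design matrices. -/
theorem det_discounted_design_le {d : ℕ} (t : ℕ) (A : ℕ → (Fin d → ℝ))
    (γ lam L : ℝ) (hγ0 : 0 < γ) (hγ1 : γ < 1) (hlam : 0 < lam)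
    (hA : ∀ s ∈ Icc 1 t, Real.sqrt (A s ⬝ᵥ A s) ≤ L) :
    (∑ s ∈ Icc 1 t, (γ ^ s)⁻¹ • vecMulVec (A s) (A s)
        + (lam * (γ ^ t)⁻¹) • (1 : Matrix (Fin d) (Fin d) ℝ)).det
      ≤ (lam * (γ ^ t)⁻¹ + L ^ 2 * ((γ ^ t)⁻¹ - 1) / (d * (1 - γ))) ^ d
    ∧
    (∑ s ∈ Icc 1 t, (γ ^ (2 * s))⁻¹ • vecMulVec (A s) (A s)
        + (lam * (γ ^ (2 * t))⁻¹) • (1 : Matrix (Fin d) (Fin d) ℝ)).det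
      ≤ (lam * (γ ^ (2 * t))⁻¹ + L ^ 2 * ((γ ^ (2 * t))⁻¹ - 1) / (d * (1 - γ ^ 2))) ^ d := by
  have hA2 : ∀ s ∈ Icc 1 t, A s ⬝ᵥ A s ≤ L ^ 2 := by
    intro s hs
    have hx : 0 ≤ A s ⬝ᵥ A s :=
      Finset.sum_nonneg fun i _ => mul_self_nonneg _
    calc A s ⬝ᵥ A s = Real.sqrt (A s ⬝ᵥ A s) ^ 2 := (Real.sq_sqrt hx).symm
      _ ≤ L ^ 2 := pow_le_pow_left₀ (Real.sqrt_nonneg _) (hA s hs) 2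
  constructor
  · exact aux_main t A γ lam L hγ0 hγ1 hlam hA2
  · have h2 := aux_main t A (γ ^ 2) lam L (by positivity)
      (pow_lt_one₀ hγ0.le hγ1 (by norm_num)) hlam hA2
    simpa [pow_mul] using h2
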